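/- arXiv:0912.2772 — 3 statements merged into one kernel-verified Lean document; each statement's English description precedes it below -/
import Mathlib

section
/- Let A : X ⇉ X* be a maximal monotone linear relation such that dom A is closed, and let S be a single-valued linear selection of A∘. Then: (i) q_A = \overline{q_A}; (ii) A_+ = ∂q_A (pointwise equality of set-valued operators) and A_+ is maximal monotone; (iii) A = A_+ + S and A* = A_+ + (−S) (pointwise Minkowski sums), so that both A and A* are Borwein–Wiersma decomposable. -/
open Pointwise
open scoped Classical

noncomputable section

abbrev Dl (X : Type*) [NormedAddCommGroup X] [NormedSpace ℝ X] : Type _ :=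
  StrongDual ℝ X

variable {X : Type*} [NormedAddCommGroup X] [NormedSpace ℝ X]

/-- The graph of a set-valued operator. -/
def graphOf (A : X → Set (Dl X)) : Set (X × Dl X) := {p | p.2 ∈ A p.1}

/-- The domain of a set-valued operator. -/
def domOf (A : X → Set (Dl X)) : Set X := {x | (A x).Nonempty}

/-- Monotone set-valued operator. -/
def MonotoneOp (A : X → Set (Dl X)) : Prop :=
  ∀ ⦃x xs y ys⦄, xs ∈ A x → ys ∈ A y → 0 ≤ (xs - ys) (x - y)

/-- Maximal monotone set-valued operator. -/
def MaxMonotoneOp (A : X → Set (Dl X)) : Prop :=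
  MonotoneOp A ∧ ∀ x xs, (∀ y ys, ys ∈ A y → 0 ≤ (xs - ys) (x - y)) → xs ∈ A x

/-- `A` is a linear relation: its graph is a linear subspace of `X × X*`. -/
def IsLinearRelation (A : X → Set (Dl X)) : Prop :=
  (0 : Dl X) ∈ A 0 ∧
  (∀ x xs y ys, xs ∈ A x → ys ∈ A y → xs + ys ∈ A (x + y)) ∧
  (∀ (c : ℝ) x xs, xs ∈ A x → c • xs ∈ A (c • x))

/-- The adjoint of a linear relation. -/
def adjointRel (A : X → Set (Dl X)) : X → Set (Dl X) :=
  fun x => {xs | ∀ a as, as ∈ A a → xs a = as x}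

/-- Skew linear relation. -/
def SkewOp (A : X → Set (Dl X)) : Prop := ∀ x xs, xs ∈ A x → xs x = 0

/-- Symmetric linear relation: `gra A ⊆ gra A*`. -/
def SymOp (A : X → Set (Dl X)) : Prop := graphOf A ⊆ graphOf (adjointRel A)

/-- At most single-valued. -/
def AtMostSingleValued (A : X → Set (Dl X)) : Prop := ∀ x, (A x).Subsingleton

/-- The symmetric part `A₊ = ½A + ½A*` (pointwise). -/
def symPart (A : X → Set (Dl X)) : X → Set (Dl X) :=
  fun x => (2 : ℝ)⁻¹ • A x + (2 : ℝ)⁻¹ • adjointRel A x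

/-- The skew part `A∘ = ½A − ½A*` (pointwise). -/
def skewPart (A : X → Set (Dl X)) : X → Set (Dl X) :=
  fun x => (2 : ℝ)⁻¹ • A x - (2 : ℝ)⁻¹ • adjointRel A x

/-- Proper extended-real-valued function. -/
def ProperFun (f : X → EReal) : Prop := (∀ x, f x ≠ ⊥) ∧ ∃ x, f x ≠ ⊤

/-- Convex extended-real-valued function. -/
def ConvexFun (f : X → EReal) : Prop :=
  ∀ x y, ∀ a b : ℝ, 0 ≤ a → 0 ≤ b → a + b = 1 →
    f (a • x + b • y) ≤ (a : EReal) * f x + (b : EReal) * f y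

/-- The subdifferential of an extended-real-valued function. -/
def subdiff (f : X → EReal) : X → Set (Dl X) :=
  fun x => {xs | ∀ y, (xs (y - x) : EReal) + f x ≤ f y}

/-- Borwein–Wiersma decomposability. -/
def BWDecomposable (A : X → Set (Dl X)) : Prop :=
  ∃ (f : X → EReal) (S : X → Set (Dl X)),
    ProperFun f ∧ LowerSemicontinuous f ∧ ConvexFun f ∧
    IsLinearRelation S ∧ SkewOp S ∧ AtMostSingleValued S ∧
    ∀ x, A x = subdiff f x + S x

/-- The quadratic function `q_A` associated with a monotone linear relation:
`q_A x = ½⟨x, x*⟩` for any `x* ∈ Ax` (`+∞` if `Ax = ∅`). -/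
def qA (A : X → Set (Dl X)) : X → EReal :=
  fun x => sInf {v : EReal | ∃ xs ∈ A x, v = (((2 : ℝ)⁻¹ * xs x : ℝ) : EReal)}

/-- The lower semicontinuous hull: the largest lsc function majorized by `f`. -/
def lscHull (f : X → EReal) : X → EReal :=
  fun x => sSup {v : EReal | ∃ g : X → EReal,
    LowerSemicontinuous g ∧ (∀ y, g y ≤ f y) ∧ v = g x}

/-- The Fenchel conjugate. -/
def fenchel (f : X → EReal) : Dl X → EReal :=
  fun xs => ⨆ x, ((xs x : EReal) - f x)

/-- Indicator function (values in `(-∞, +∞]`). -/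
def indFun (C : Set X) : X → EReal := fun x => if x ∈ C then 0 else ⊤

/-- `S` is a single-valued linear selection of the set-valued operator `B`. -/
def IsLinearSelection (S B : X → Set (Dl X)) : Prop :=
  IsLinearRelation S ∧ AtMostSingleValued S ∧ domOf S = domOf B ∧ ∀ x, S x ⊆ B x

/-- Irreducible (acyclic) operator in the sense of Asplund. -/
def IrreducibleOp (A : X → Set (Dl X)) : Prop :=
  ∀ (f : X → EReal) (S : X → Set (Dl X)),
    ProperFun f → LowerSemicontinuous f → ConvexFun f → MonotoneOp S →
    (∀ x, A x = subdiff f x + S x) →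
    ∃ p : Dl X, (⋃ x ∈ domOf A, subdiff f x) = {p}

/-- Asplund decomposability. -/
def AsplundDecomposable (A : X → Set (Dl X)) : Prop :=
  ∃ (f : X → EReal) (S : X → Set (Dl X)),
    ProperFun f ∧ LowerSemicontinuous f ∧ ConvexFun f ∧
    IrreducibleOp S ∧ ∀ x, A x = subdiff f x + S x

/-- Reflexivity of a real normed space. -/
def ReflexiveReal (X : Type*) [NormedAddCommGroup X] [NormedSpace ℝ X] : Prop :=
  Function.Surjective (NormedSpace.inclusionInDoubleDual ℝ X)

namespace BWAux

open Filter Topology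

theorem real_eq_zero_of_forall_mul_le {a b : ℝ} (h : ∀ t : ℝ, t * a ≤ t ^ 2 * b) : a = 0 := by
  have h1 := h 1
  have h2 := h (-1)
  by_contra ha
  have hb : 0 < b := by
    have habs : |a| ≤ b := abs_le.mpr ⟨by linarith, by linarith⟩
    have := abs_pos.mpr ha
    linarith
  have h3 := h (a / (2 * b))
  have hb' : (2 * b) ≠ 0 := by positivity
  rw [div_pow] at h3
  have e1 : a / (2 * b) * a = a ^ 2 / (2 * b) := by ring
  rw [e1] at h3
  have e2 : a ^ 2 / (2 * b) ^ 2 * b = a ^ 2 / (4 * b) := by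
    field_simp; ring
  rw [e2] at h3
  have h4 : a ^ 2 / (4 * b) < a ^ 2 / (2 * b) := by
    apply div_lt_div_of_pos_left
    · positivity
    · positivity
    · linarith
  linarith

theorem real_eq_zero_of_forall_le {a b : ℝ} (h : ∀ t : ℝ, 0 ≤ a - t * b) : b = 0 := by
  by_contra hb
  have h1 := h ((a + 1) / b)
  rw [div_mul_cancel₀ _ hb] at h1
  linarith

theorem real_eq_zero_of_forall_lt {u c : ℝ} (h : ∀ t : ℝ, u < t * c) : c = 0 := by
  by_contra hc
  have h1 := h ((u - 1) / c)
  rw [div_mul_cancel₀ _ hc] at h1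
  linarith

variable {X : Type*} [NormedAddCommGroup X] [NormedSpace ℝ X]
variable {A : X → Set (Dl X)}

theorem zero_mem_dom (hlin : IsLinearRelation A) : (0 : X) ∈ domOf A := ⟨0, hlin.1⟩

theorem add_mem_dom (hlin : IsLinearRelation A) {x y : X} (hx : x ∈ domOf A)
    (hy : y ∈ domOf A) : x + y ∈ domOf A := by
  obtain ⟨xs, hxs⟩ := hx; obtain ⟨ys, hys⟩ := hy
  exact ⟨xs + ys, hlin.2.1 _ _ _ _ hxs hys⟩

theorem smul_mem_dom (hlin : IsLinearRelation A) {x : X} (hx : x ∈ domOf A) (c : ℝ) :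
    c • x ∈ domOf A := by
  obtain ⟨xs, hxs⟩ := hx
  exact ⟨c • xs, hlin.2.2 c _ _ hxs⟩

theorem sub_mem_dom (hlin : IsLinearRelation A) {x y : X} (hx : x ∈ domOf A)
    (hy : y ∈ domOf A) : x - y ∈ domOf A := by
  have := add_mem_dom hlin hx (smul_mem_dom hlin hy (-1))
  simpa [sub_eq_add_neg] using this

theorem pos_of_mem (hmono : MonotoneOp A) (hlin : IsLinearRelation A) {x : X} {xs : Dl X}
    (h : xs ∈ A x) : 0 ≤ xs x := by
  have := hmono h hlin.1
  simpa using this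

theorem A0_ann (hlin : IsLinearRelation A) (hmono : MonotoneOp A) {w : Dl X} (hw : w ∈ A 0)
    {y : X} (hy : y ∈ domOf A) : w y = 0 := by
  obtain ⟨ys, hys⟩ := hy
  have key : ∀ t : ℝ, 0 ≤ ys y - t * (w y) := by
    intro t
    have htw : t • w ∈ A 0 := by
      have := hlin.2.2 t 0 w hw
      simpa using this
    have := hmono hys htw
    simpa [ContinuousLinearMap.sub_apply, ContinuousLinearMap.smul_apply, smul_eq_mul] using this
  exact real_eq_zero_of_forall_le key

theorem ann_A0 (hlin : IsLinearRelation A) (hmax : MaxMonotoneOp A) {w : Dl X}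
    (hw : ∀ y ∈ domOf A, w y = 0) : w ∈ A 0 := by
  apply hmax.2
  intro y ys hys
  have h0 : (0 : ℝ) ≤ ys y := pos_of_mem hmax.1 hlin hys
  have hwy : w y = 0 := hw y ⟨ys, hys⟩
  have : (w - ys) (0 - y) = ys y - w y := by
    simp only [ContinuousLinearMap.sub_apply, zero_sub, map_neg]
    ring
  rw [this, hwy]
  linarith

theorem mem_iff (hlin : IsLinearRelation A) (hmax : MaxMonotoneOp A) {x : X} {xs : Dl X}
    (hxs : xs ∈ A x) (zs : Dl X) :
    zs ∈ A x ↔ ∀ y ∈ domOf A, zs y = xs y := by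
  constructor
  · intro hzs y hy
    have hsub : zs - xs ∈ A 0 := by
      have h1 : zs + (-1 : ℝ) • xs ∈ A (x + (-1 : ℝ) • x) := by
        exact hlin.2.1 _ _ _ _ hzs (hlin.2.2 (-1) x xs hxs)
      have e1 : x + (-1 : ℝ) • x = 0 := by module
      have e2 : zs + (-1 : ℝ) • xs = zs - xs := by module
      rwa [e1, e2] at h1
    have := A0_ann hlin hmax.1 hsub hy
    simp only [ContinuousLinearMap.sub_apply] at this
    linarith
  · intro h
    have hw : zs - xs ∈ A 0 := by
      apply ann_A0 hlin hmax
      intro y hy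
      simp only [ContinuousLinearMap.sub_apply, h y hy, sub_self]
    have h2 := hlin.2.1 x xs 0 (zs - xs) hxs hw
    simpa using h2

def selA (A : X → Set (Dl X)) : X → Dl X := fun x =>
  if h : (A x).Nonempty then h.choose else 0

theorem selA_mem {x : X} (hx : x ∈ domOf A) : selA A x ∈ A x := by
  have hx' : (A x).Nonempty := hx
  rw [selA, dif_pos hx']
  exact hx'.choose_spec

theorem apply_eq_selA (hlin : IsLinearRelation A) (hmax : MaxMonotoneOp A) {x : X} {xs : Dl X}
    (hxs : xs ∈ A x) {y : X} (hy : y ∈ domOf A) : xs y = selA A x y :=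
  ((mem_iff hlin hmax (selA_mem ⟨xs, hxs⟩) xs).mp hxs) y hy

theorem selA_add (hlin : IsLinearRelation A) (hmax : MaxMonotoneOp A) {x y z : X}
    (hx : x ∈ domOf A) (hy : y ∈ domOf A) (hz : z ∈ domOf A) :
    selA A (x + y) z = selA A x z + selA A y z := by
  have hmem : selA A x + selA A y ∈ A (x + y) := hlin.2.1 _ _ _ _ (selA_mem hx) (selA_mem hy)
  have := apply_eq_selA hlin hmax hmem hz
  simpa [ContinuousLinearMap.add_apply] using this.symm

theorem selA_smul (hlin : IsLinearRelation A) (hmax : MaxMonotoneOp A) {x z : X} (c : ℝ)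
    (hx : x ∈ domOf A) (hz : z ∈ domOf A) :
    selA A (c • x) z = c * selA A x z := by
  have hmem : c • selA A x ∈ A (c • x) := hlin.2.2 c _ _ (selA_mem hx)
  have := apply_eq_selA hlin hmax hmem hz
  simpa [ContinuousLinearMap.smul_apply, smul_eq_mul] using this.symm

theorem selA_nonneg (hlin : IsLinearRelation A) (hmono : MonotoneOp A) {x : X}
    (hx : x ∈ domOf A) : 0 ≤ selA A x x :=
  pos_of_mem hmono hlin (selA_mem hx)

theorem mem_dom_of_ann (hlin : IsLinearRelation A) (hdom : IsClosed (domOf A)) {x : X}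
    (hx : ∀ w : Dl X, (∀ y ∈ domOf A, w y = 0) → w x = 0) : x ∈ domOf A := by
  by_contra hxn
  have hconv : Convex ℝ (domOf A) := by
    intro u hu v hv a b _ _ _
    exact add_mem_dom hlin (smul_mem_dom hlin hu a) (smul_mem_dom hlin hv b)
  obtain ⟨f, u, hfx, hf⟩ := geometric_hahn_banach_point_closed hconv hdom hxn
  have hu0 : u < 0 := by simpa using hf 0 (zero_mem_dom hlin)
  have hfy : ∀ y ∈ domOf A, f y = 0 := by
    intro y hy
    refine real_eq_zero_of_forall_lt (u := u) ?_
    intro t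
    have := hf (t • y) (smul_mem_dom hlin hy t)
    simpa [map_smul, smul_eq_mul] using this
  have := hx f hfy
  linarith

end BWAux
namespace BWAux

open Filter Topology

variable {X : Type*} [NormedAddCommGroup X] [NormedSpace ℝ X]
variable {A : X → Set (Dl X)}

/-- The domain of a linear relation as a submodule. -/
def Ysub (A : X → Set (Dl X)) (hlin : IsLinearRelation A) : Submodule ℝ X where
  carrier := domOf A
  add_mem' := fun ha hb => add_mem_dom hlin ha hb
  zero_mem' := zero_mem_dom hlin
  smul_mem' := fun c _ hx => smul_mem_dom hlin hx c

theorem mem_Ysub (hlin : IsLinearRelation A) {x : X} :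
    x ∈ Ysub A hlin ↔ x ∈ domOf A := Iff.rfl

/-- The operator `A` as a linear map from its domain to the dual of its domain. -/
def Lmap (hlin : IsLinearRelation A) (hmax : MaxMonotoneOp A) :
    ↥(Ysub A hlin) →ₗ[ℝ] (StrongDual ℝ ↥(Ysub A hlin)) where
  toFun := fun a => (selA A a).comp (Ysub A hlin).subtypeL
  map_add' := by
    intro a b
    ext z
    have := selA_add hlin hmax a.2 b.2 z.2
    simpa [ContinuousLinearMap.comp_apply, ContinuousLinearMap.add_apply] using this
  map_smul' := by
    intro c a
    ext z
    have := selA_smul hlin hmax c a.2 z.2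
    simpa [ContinuousLinearMap.comp_apply, ContinuousLinearMap.smul_apply,
      smul_eq_mul] using this

theorem Lmap_apply (hlin : IsLinearRelation A) (hmax : MaxMonotoneOp A)
    (a z : ↥(Ysub A hlin)) : Lmap hlin hmax a z = selA A (a : X) (z : X) := rfl

set_option maxHeartbeats 1000000 in
theorem Lmap_cont [CompleteSpace X] (hlin : IsLinearRelation A) (hmax : MaxMonotoneOp A)
    (hdom : IsClosed (domOf A)) : Continuous ⇑(Lmap hlin hmax) := by
  haveI : CompleteSpace ↥(Ysub A hlin) :=
    IsClosed.completeSpace_coe (s := ((Ysub A hlin : Submodule ℝ X) : Set X)) (hs := hdom)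
  letI : NormedAddCommGroup (StrongDual ℝ ↥(Ysub A hlin)) := inferInstance
  letI : NormedSpace ℝ (StrongDual ℝ ↥(Ysub A hlin)) := inferInstance
  apply (Lmap hlin hmax).continuous_of_seq_closed_graph
  intro u x g hu hLu
  obtain ⟨G, hG, -⟩ := exists_extension_norm_eq (Ysub A hlin) g
  have hGA : G ∈ A (x : X) := by
    apply hmax.2
    intro b bs hbs
    have hb : b ∈ domOf A := ⟨bs, hbs⟩
    set b' : ↥(Ysub A hlin) := ⟨b, hb⟩ with hb'
    have hterm : ∀ n, 0 ≤ (Lmap hlin hmax (u n)) (u n - b') - bs ((u n : X) - b) := by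
      intro n
      have hm := hmax.1 (selA_mem (A := A) (u n).2) hbs
      have e : (Lmap hlin hmax (u n)) (u n - b') = selA A (u n : X) ((u n : X) - b) := by
        rw [Lmap_apply]; rfl
      rw [e]
      simpa [ContinuousLinearMap.sub_apply] using hm
    have h1 : Tendsto (fun n => (Lmap hlin hmax (u n)) (u n - b')) atTop (𝓝 (g (x - b'))) := by
      have hp : Tendsto (fun n => ((⇑(Lmap hlin hmax) ∘ u) n, u n - b')) atTop
          (𝓝 (g, x - b')) := hLu.prodMk_nhds (hu.sub tendsto_const_nhds)
      exact ((isBoundedBilinearMap_apply (𝕜 := ℝ) (E := ↥(Ysub A hlin))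
        (F := ℝ)).continuous.tendsto (g, x - b')).comp hp
    have h2 : Tendsto (fun n => bs ((u n : X) - b)) atTop (𝓝 (bs ((x : X) - b))) := by
      have hv : Tendsto (fun n => ((u n : X) - b)) atTop (𝓝 ((x : X) - b)) :=
        ((continuous_subtype_val.tendsto x).comp hu).sub tendsto_const_nhds
      exact (bs.continuous.tendsto _).comp hv
    have hlim : Tendsto (fun n => (Lmap hlin hmax (u n)) (u n - b') - bs ((u n : X) - b)) atTop
        (𝓝 (g (x - b') - bs ((x : X) - b))) := h1.sub h2
    have hge : 0 ≤ g (x - b') - bs ((x : X) - b) :=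
      le_of_tendsto_of_tendsto' tendsto_const_nhds hlim hterm
    have hGg : g (x - b') = G ((x : X) - b) := by
      have hc : ((x - b' : ↥(Ysub A hlin)) : X) = (x : X) - b := rfl
      rw [← hc]
      exact (hG _).symm
    have : 0 ≤ G ((x : X) - b) - bs ((x : X) - b) := by rw [← hGg]; exact hge
    simpa [ContinuousLinearMap.sub_apply] using this
  ext z
  have h1 : G (z : X) = selA A (x : X) (z : X) := apply_eq_selA hlin hmax hGA z.2
  have h2 : g z = G (z : X) := (hG z).symm
  rw [h2, h1, Lmap_apply]

set_option maxHeartbeats 1000000 in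
theorem exists_bound [CompleteSpace X] (hlin : IsLinearRelation A) (hmax : MaxMonotoneOp A)
    (hdom : IsClosed (domOf A)) :
    ∃ C : ℝ, 0 ≤ C ∧ ∀ x ∈ domOf A, ∀ y ∈ domOf A, |selA A x y| ≤ C * ‖x‖ * ‖y‖ := by
  classical
  letI : NormedAddCommGroup (StrongDual ℝ ↥(Ysub A hlin)) := inferInstance
  letI : NormedSpace ℝ (StrongDual ℝ ↥(Ysub A hlin)) := inferInstance
  let M : ↥(Ysub A hlin) →L[ℝ] (StrongDual ℝ ↥(Ysub A hlin)) :=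
    ⟨Lmap hlin hmax, Lmap_cont hlin hmax hdom⟩
  refine ⟨‖M‖, M.opNorm_nonneg, ?_⟩
  intro x hx y hy
  have he : selA A x y = (M ⟨x, hx⟩) ⟨y, hy⟩ := rfl
  rw [he]
  have h1 : |(M ⟨x, hx⟩) ⟨y, hy⟩| ≤ ‖M ⟨x, hx⟩‖ * ‖(⟨y, hy⟩ : ↥(Ysub A hlin))‖ := by
    simpa [Real.norm_eq_abs] using (M ⟨x, hx⟩).le_opNorm (⟨y, hy⟩ : ↥(Ysub A hlin))
  have h2 : ‖M ⟨x, hx⟩‖ ≤ ‖M‖ * ‖(⟨x, hx⟩ : ↥(Ysub A hlin))‖ := M.le_opNorm _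
  have hyn : ‖(⟨y, hy⟩ : ↥(Ysub A hlin))‖ = ‖y‖ := rfl
  have hxn : ‖(⟨x, hx⟩ : ↥(Ysub A hlin))‖ = ‖x‖ := rfl
  rw [hyn] at h1
  rw [hxn] at h2
  calc |(M ⟨x, hx⟩) ⟨y, hy⟩| ≤ ‖M ⟨x, hx⟩‖ * ‖y‖ := h1
    _ ≤ ‖M‖ * ‖x‖ * ‖y‖ := by
        have := mul_le_mul_of_nonneg_right h2 (norm_nonneg y)
        linarith

set_option maxHeartbeats 1000000 in
theorem exists_gst [CompleteSpace X] (hlin : IsLinearRelation A) (hmax : MaxMonotoneOp A)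
    (hdom : IsClosed (domOf A)) {x : X} (hx : x ∈ domOf A) :
    ∃ g : Dl X, ∀ a ∈ domOf A, g a = selA A a x := by
  classical
  obtain ⟨C, hC0, hC⟩ := exists_bound hlin hmax hdom
  let φ : ↥(Ysub A hlin) →ₗ[ℝ] ℝ :=
    { toFun := fun a => selA A (a : X) x
      map_add' := fun a b => selA_add hlin hmax a.2 b.2 hx
      map_smul' := fun c a => by
        simpa [smul_eq_mul] using selA_smul hlin hmax c a.2 hx }
  have hφb : ∀ a : ↥(Ysub A hlin), ‖φ a‖ ≤ (C * ‖x‖) * ‖a‖ := by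
    intro a
    have h1 : |selA A (a : X) x| ≤ C * ‖(a : X)‖ * ‖x‖ := hC (a : X) a.2 x hx
    have h2 : ‖φ a‖ = |selA A (a : X) x| := Real.norm_eq_abs _
    have h3 : ‖a‖ = ‖(a : X)‖ := rfl
    rw [h2, h3]
    calc |selA A (a : X) x| ≤ C * ‖(a : X)‖ * ‖x‖ := h1
      _ = (C * ‖x‖) * ‖(a : X)‖ := by ring
  let φc : StrongDual ℝ ↥(Ysub A hlin) := LinearMap.mkContinuous φ (C * ‖x‖) hφb
  obtain ⟨g, hg, -⟩ := exists_extension_norm_eq (Ysub A hlin) φc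
  exact ⟨g, fun a ha => hg ⟨a, ha⟩⟩

end BWAux
namespace BWAux

open Filter Topology

variable {X : Type*} [NormedAddCommGroup X] [NormedSpace ℝ X]
variable {A : X → Set (Dl X)}

theorem selA_sub_left (hlin : IsLinearRelation A) (hmax : MaxMonotoneOp A) {x y z : X}
    (hx : x ∈ domOf A) (hy : y ∈ domOf A) (hz : z ∈ domOf A) :
    selA A (x - y) z = selA A x z - selA A y z := by
  have h1 : selA A (x + (-1 : ℝ) • y) z = selA A x z + selA A ((-1 : ℝ) • y) z :=
    selA_add hlin hmax hx (smul_mem_dom hlin hy (-1)) hz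
  have h2 : selA A ((-1 : ℝ) • y) z = (-1) * selA A y z := selA_smul hlin hmax (-1) hy hz
  have e : x + (-1 : ℝ) • y = x - y := by module
  rw [e] at h1
  rw [h1, h2]
  ring

theorem A_empty {x : X} (hx : x ∉ domOf A) : A x = ∅ :=
  Set.not_nonempty_iff_eq_empty.mp hx

theorem A_mem_iff (hlin : IsLinearRelation A) (hmax : MaxMonotoneOp A) {x : X}
    (hx : x ∈ domOf A) (zs : Dl X) :
    zs ∈ A x ↔ ∀ y ∈ domOf A, zs y = selA A x y :=
  mem_iff hlin hmax (selA_mem hx) zs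

theorem adj_mem_iff (hlin : IsLinearRelation A) (hmax : MaxMonotoneOp A) {x : X}
    (hx : x ∈ domOf A) (zs : Dl X) :
    zs ∈ adjointRel A x ↔ ∀ a ∈ domOf A, zs a = selA A a x := by
  constructor
  · intro h a ha
    exact h a (selA A a) (selA_mem ha)
  · intro h a as has
    have ha : a ∈ domOf A := ⟨as, has⟩
    rw [h a ha, ← apply_eq_selA hlin hmax has hx]

theorem adj_empty (hlin : IsLinearRelation A) (hmax : MaxMonotoneOp A)
    (hdom : IsClosed (domOf A)) {x : X} (hx : x ∉ domOf A) : adjointRel A x = ∅ := by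
  rw [Set.eq_empty_iff_forall_notMem]
  intro zs hzs
  apply hx
  apply mem_dom_of_ann hlin hdom
  intro w hw
  have hw0 : w ∈ A 0 := ann_A0 hlin hmax hw
  have := hzs 0 w hw0
  simpa using this.symm

theorem adj_nonempty [CompleteSpace X] (hlin : IsLinearRelation A) (hmax : MaxMonotoneOp A)
    (hdom : IsClosed (domOf A)) {x : X} (hx : x ∈ domOf A) :
    ∃ g ∈ adjointRel A x, ∀ a ∈ domOf A, g a = selA A a x := by
  obtain ⟨g, hg⟩ := exists_gst hlin hmax hdom hx
  exact ⟨g, (adj_mem_iff hlin hmax hx g).mpr hg, hg⟩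

theorem sym_mem_iff (hlin : IsLinearRelation A) (hmax : MaxMonotoneOp A) {x : X}
    (hx : x ∈ domOf A) (zs : Dl X) :
    zs ∈ symPart A x ↔ ∀ h ∈ domOf A, zs h = 2⁻¹ * (selA A x h + selA A h x) := by
  constructor
  · intro hzs h hh
    rw [symPart] at hzs
    obtain ⟨u, hu, v, hv, huv⟩ := Set.mem_add.mp hzs
    obtain ⟨as, has, rfl⟩ := Set.mem_smul_set.mp hu
    obtain ⟨vs, hvs, rfl⟩ := Set.mem_smul_set.mp hv
    have h1 : as h = selA A x h := apply_eq_selA hlin hmax has hh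
    have h2 : vs h = selA A h x := (adj_mem_iff hlin hmax hx vs).mp hvs h hh
    rw [← huv]
    simp only [ContinuousLinearMap.add_apply, ContinuousLinearMap.smul_apply, smul_eq_mul,
      h1, h2]
    ring
  · intro hzs
    set vs : Dl X := (2 : ℝ) • zs - selA A x with hvs
    have hvmem : vs ∈ adjointRel A x := by
      apply (adj_mem_iff hlin hmax hx vs).mpr
      intro a ha
      have := hzs a ha
      simp only [hvs, ContinuousLinearMap.sub_apply, ContinuousLinearMap.smul_apply,
        smul_eq_mul, this]
      ring
    rw [symPart]
    apply Set.mem_add.mpr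
    refine ⟨(2 : ℝ)⁻¹ • selA A x, Set.smul_mem_smul_set (selA_mem hx),
      (2 : ℝ)⁻¹ • vs, Set.smul_mem_smul_set hvmem, ?_⟩
    rw [hvs]
    module

theorem sym_empty {x : X} (hx : x ∉ domOf A) : symPart A x = ∅ := by
  rw [symPart, A_empty hx]
  simp

theorem skew_mem_iff (hlin : IsLinearRelation A) (hmax : MaxMonotoneOp A) {x : X}
    (hx : x ∈ domOf A) (zs : Dl X) :
    zs ∈ skewPart A x ↔ ∀ h ∈ domOf A, zs h = 2⁻¹ * (selA A x h - selA A h x) := by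
  constructor
  · intro hzs h hh
    rw [skewPart] at hzs
    obtain ⟨u, hu, v, hv, huv⟩ := Set.mem_sub.mp hzs
    obtain ⟨as, has, rfl⟩ := Set.mem_smul_set.mp hu
    obtain ⟨vs, hvs, rfl⟩ := Set.mem_smul_set.mp hv
    have h1 : as h = selA A x h := apply_eq_selA hlin hmax has hh
    have h2 : vs h = selA A h x := (adj_mem_iff hlin hmax hx vs).mp hvs h hh
    rw [← huv]
    simp only [ContinuousLinearMap.sub_apply, ContinuousLinearMap.smul_apply, smul_eq_mul,
      h1, h2]
    ring
  · intro hzs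
    set vs : Dl X := selA A x - (2 : ℝ) • zs with hvs
    have hvmem : vs ∈ adjointRel A x := by
      apply (adj_mem_iff hlin hmax hx vs).mpr
      intro a ha
      have := hzs a ha
      simp only [hvs, ContinuousLinearMap.sub_apply, ContinuousLinearMap.smul_apply,
        smul_eq_mul, this]
      ring
    rw [skewPart]
    apply Set.mem_sub.mpr
    refine ⟨(2 : ℝ)⁻¹ • selA A x, Set.smul_mem_smul_set (selA_mem hx),
      (2 : ℝ)⁻¹ • vs, Set.smul_mem_smul_set hvmem, ?_⟩
    rw [hvs]
    module

theorem skew_empty {x : X} (hx : x ∉ domOf A) : skewPart A x = ∅ := by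
  rw [skewPart, A_empty hx]
  simp

theorem dom_skew (hlin : IsLinearRelation A) (hmax : MaxMonotoneOp A)
    (hdom : IsClosed (domOf A)) [CompleteSpace X] :
    domOf (skewPart A) = domOf A := by
  ext x
  constructor
  · intro hx
    by_contra hxn
    rw [domOf, Set.mem_setOf_eq, skew_empty hxn] at hx
    exact Set.not_nonempty_empty hx
  · intro hx
    obtain ⟨g, hg, hgs⟩ := adj_nonempty hlin hmax hdom hx
    refine ⟨(2 : ℝ)⁻¹ • selA A x - (2 : ℝ)⁻¹ • g, ?_⟩
    rw [skewPart]
    exact Set.sub_mem_sub (Set.smul_mem_smul_set (selA_mem hx)) (Set.smul_mem_smul_set hg)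

theorem qA_eq (hlin : IsLinearRelation A) (hmax : MaxMonotoneOp A) {x : X}
    (hx : x ∈ domOf A) :
    qA A x = (((2 : ℝ)⁻¹ * selA A x x : ℝ) : EReal) := by
  have hset : {v : EReal | ∃ xs ∈ A x, v = (((2 : ℝ)⁻¹ * xs x : ℝ) : EReal)} =
      {(((2 : ℝ)⁻¹ * selA A x x : ℝ) : EReal)} := by
    ext v
    simp only [Set.mem_setOf_eq, Set.mem_singleton_iff]
    constructor
    · rintro ⟨xs, hxs, rfl⟩
      rw [apply_eq_selA hlin hmax hxs hx]
    · rintro rfl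
      exact ⟨selA A x, selA_mem hx, rfl⟩
  rw [qA, hset, sInf_singleton]

theorem qA_top {x : X} (hx : x ∉ domOf A) : qA A x = ⊤ := by
  have hset : {v : EReal | ∃ xs ∈ A x, v = (((2 : ℝ)⁻¹ * xs x : ℝ) : EReal)} = ∅ := by
    rw [Set.eq_empty_iff_forall_notMem]
    rintro v ⟨xs, hxs, -⟩
    exact hx ⟨xs, hxs⟩
  rw [qA, hset, sInf_empty]

theorem qA_ne_bot (hlin : IsLinearRelation A) (hmax : MaxMonotoneOp A) (x : X) :
    qA A x ≠ ⊥ := by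
  classical
  by_cases hx : x ∈ domOf A
  · rw [qA_eq hlin hmax hx]; exact EReal.coe_ne_bot _
  · rw [qA_top hx]; simp
end BWAux
namespace BWAux

open Filter Topology

variable {X : Type*} [NormedAddCommGroup X] [NormedSpace ℝ X]
variable {A : X → Set (Dl X)}

theorem real_eq_of_quad {a c e d : ℝ} (h : ∀ t : ℝ, t * a + d ≤ d + t * c + t ^ 2 * e) :
    a = c := by
  have h2 : ∀ t : ℝ, t * (a - c) ≤ t ^ 2 * e := by
    intro t
    have := h t
    nlinarith [this]
  have := real_eq_zero_of_forall_mul_le h2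
  linarith

theorem subdiff_qA_mem_iff (hlin : IsLinearRelation A) (hmax : MaxMonotoneOp A) {x : X}
    (hx : x ∈ domOf A) (zs : Dl X) :
    zs ∈ subdiff (qA A) x ↔ ∀ h ∈ domOf A, zs h = 2⁻¹ * (selA A x h + selA A h x) := by
  constructor
  · intro hzs h hh
    have key : ∀ t : ℝ, t * zs h + 2⁻¹ * selA A x x ≤
        2⁻¹ * selA A x x + t * (2⁻¹ * (selA A x h + selA A h x)) +
          t ^ 2 * (2⁻¹ * selA A h h) := by
      intro t
      have hth : t • h ∈ domOf A := smul_mem_dom hlin hh t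
      have hy : x + t • h ∈ domOf A := add_mem_dom hlin hx hth
      have h1 := hzs (x + t • h)
      rw [qA_eq hlin hmax hx, qA_eq hlin hmax hy] at h1
      have e0 : x + t • h - x = t • h := add_sub_cancel_left x (t • h)
      rw [e0] at h1
      have e1 : zs (t • h) = t * zs h := by
        rw [map_smul, smul_eq_mul]
      rw [e1, ← EReal.coe_add, EReal.coe_le_coe_iff] at h1
      have l1 : selA A (x + t • h) (x + t • h) = selA A x (x + t • h) +
          selA A (t • h) (x + t • h) := selA_add hlin hmax hx hth hy
      have l2 : selA A (t • h) (x + t • h) = t * selA A h (x + t • h) :=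
        selA_smul hlin hmax t hh hy
      have l3 : selA A x (x + t • h) = selA A x x + t * selA A x h := by
        rw [map_add, map_smul, smul_eq_mul]
      have l4 : selA A h (x + t • h) = selA A h x + t * selA A h h := by
        rw [map_add, map_smul, smul_eq_mul]
      rw [l1, l2, l3, l4] at h1
      nlinarith [h1]
    exact real_eq_of_quad key
  · intro hzs y
    by_cases hy : y ∈ domOf A
    · have hyx : y - x ∈ domOf A := sub_mem_dom hlin hy hx
      rw [qA_eq hlin hmax hx, qA_eq hlin hmax hy, ← EReal.coe_add, EReal.coe_le_coe_iff]
      have e1 : zs (y - x) = 2⁻¹ * (selA A x (y - x) + selA A (y - x) x) := hzs (y - x) hyx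
      have e2 : selA A x (y - x) = selA A x y - selA A x x := map_sub _ _ _
      have e3 : selA A (y - x) x = selA A y x - selA A x x :=
        selA_sub_left hlin hmax hy hx hx
      have e4 : selA A (y - x) (y - x) =
          (selA A y y - selA A y x) - (selA A x y - selA A x x) := by
        rw [selA_sub_left hlin hmax hy hx hyx, map_sub, map_sub]
      have e5 : 0 ≤ selA A (y - x) (y - x) := selA_nonneg hlin hmax.1 hyx
      have e6 : 0 ≤ (selA A y y - selA A y x) - (selA A x y - selA A x x) := e4 ▸ e5
      rw [e1, e2, e3]
      linarith
    · rw [qA_top hy]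
      exact le_top

theorem subdiff_qA_empty (hlin : IsLinearRelation A) (hmax : MaxMonotoneOp A) {x : X}
    (hx : x ∉ domOf A) : subdiff (qA A) x = ∅ := by
  rw [Set.eq_empty_iff_forall_notMem]
  intro zs hzs
  have h0 := hzs 0
  rw [qA_top hx, qA_eq hlin hmax (zero_mem_dom hlin),
    EReal.add_top_of_ne_bot (EReal.coe_ne_bot _)] at h0
  exact not_top_lt (h0.trans_lt (EReal.coe_lt_top _))

theorem qA_proper (hlin : IsLinearRelation A) (hmax : MaxMonotoneOp A) :
    ProperFun (qA A) := by
  refine ⟨qA_ne_bot hlin hmax, 0, ?_⟩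
  rw [qA_eq hlin hmax (zero_mem_dom hlin)]
  exact EReal.coe_ne_top _

theorem qA_mul_ne_bot (hlin : IsLinearRelation A) (hmax : MaxMonotoneOp A) {c : ℝ}
    (hc : 0 < c) (y : X) : (c : EReal) * qA A y ≠ ⊥ := by
  by_cases hy : y ∈ domOf A
  · rw [qA_eq hlin hmax hy, ← EReal.coe_mul]
    exact EReal.coe_ne_bot _
  · rw [qA_top hy, EReal.coe_mul_top_of_pos hc]
    simp

theorem qA_convex (hlin : IsLinearRelation A) (hmax : MaxMonotoneOp A) :
    ConvexFun (qA A) := by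
  intro x y a b ha hb hab
  rcases eq_or_lt_of_le ha with ha0 | ha0
  · have hb1 : b = 1 := by linarith
    rw [← ha0, hb1]
    simp
  rcases eq_or_lt_of_le hb with hb0 | hb0
  · have ha1 : a = 1 := by linarith
    rw [← hb0, ha1]
    simp
  by_cases hx : x ∈ domOf A
  · by_cases hy : y ∈ domOf A
    · have hz : a • x + b • y ∈ domOf A :=
        add_mem_dom hlin (smul_mem_dom hlin hx a) (smul_mem_dom hlin hy b)
      rw [qA_eq hlin hmax hx, qA_eq hlin hmax hy, qA_eq hlin hmax hz,
        ← EReal.coe_mul, ← EReal.coe_mul, ← EReal.coe_add, EReal.coe_le_coe_iff]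
      have hax : a • x ∈ domOf A := smul_mem_dom hlin hx a
      have hby : b • y ∈ domOf A := smul_mem_dom hlin hy b
      have l1 : selA A (a • x + b • y) (a • x + b • y) =
          a * (a * selA A x x + b * selA A x y) + b * (a * selA A y x + b * selA A y y) := by
        rw [selA_add hlin hmax hax hby hz, selA_smul hlin hmax a hx hz,
          selA_smul hlin hmax b hy hz]
        have r1 : selA A x (a • x + b • y) = a * selA A x x + b * selA A x y := by
          rw [map_add, map_smul, map_smul, smul_eq_mul, smul_eq_mul]
        have r2 : selA A y (a • x + b • y) = a * selA A y x + b * selA A y y := by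
          rw [map_add, map_smul, map_smul, smul_eq_mul, smul_eq_mul]
        rw [r1, r2]
      rw [l1]
      have hxy : x - y ∈ domOf A := sub_mem_dom hlin hx hy
      have e4 : selA A (x - y) (x - y) =
          (selA A x x - selA A x y) - (selA A y x - selA A y y) := by
        rw [selA_sub_left hlin hmax hx hy hxy, map_sub, map_sub]
      have e5 : 0 ≤ selA A (x - y) (x - y) := selA_nonneg hlin hmax.1 hxy
      have e6 : 0 ≤ (selA A x x - selA A x y) - (selA A y x - selA A y y) := e4 ▸ e5
      have hb' : b = 1 - a := by linarith
      subst hb'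
      nlinarith [mul_nonneg (mul_pos ha0 hb0).le e6]
    · rw [qA_top hy, EReal.coe_mul_top_of_pos hb0,
        EReal.add_top_of_ne_bot (qA_mul_ne_bot hlin hmax ha0 x)]
      exact le_top
  · rw [qA_top hx, EReal.coe_mul_top_of_pos ha0,
      EReal.top_add_of_ne_bot (qA_mul_ne_bot hlin hmax hb0 y)]
    exact le_top

set_option maxHeartbeats 1000000 in
theorem qA_lsc [CompleteSpace X] (hlin : IsLinearRelation A) (hmax : MaxMonotoneOp A)
    (hdom : IsClosed (domOf A)) : LowerSemicontinuous (qA A) := by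
  obtain ⟨C, hC0, hC⟩ := exists_bound hlin hmax hdom
  intro x c hc
  by_cases hx : x ∈ domOf A
  · rw [qA_eq hlin hmax hx] at hc
    induction c using EReal.rec with
    | bot =>
      filter_upwards with y
      exact (qA_ne_bot hlin hmax y).bot_lt
    | coe r =>
      have hr : r < 2⁻¹ * selA A x x := EReal.coe_lt_coe_iff.mp hc
      set D : ℝ := 2⁻¹ * C * (1 + 2 * ‖x‖) with hD
      have hD0 : 0 ≤ D := by
        have : (0:ℝ) ≤ 1 + 2 * ‖x‖ := by positivity
        rw [hD]; positivity
      set ε : ℝ := 2⁻¹ * selA A x x - r with hε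
      have hε0 : 0 < ε := by rw [hε]; linarith
      set δ : ℝ := min 1 (ε / (D + 1)) with hδ
      have hδ0 : 0 < δ := by
        rw [hδ]
        exact lt_min one_pos (div_pos hε0 (by linarith))
      have hδ1 : δ * (D + 1) ≤ ε := by
        have h1 : δ ≤ ε / (D + 1) := min_le_right _ _
        rw [← le_div_iff₀ (by linarith : (0:ℝ) < D + 1)]
        exact h1
      filter_upwards [Metric.ball_mem_nhds x hδ0] with y hy
      by_cases hym : y ∈ domOf A
      · rw [qA_eq hlin hmax hym]
        apply EReal.coe_lt_coe_iff.mpr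
        have hd : ‖y - x‖ < δ := by
          rw [← dist_eq_norm]
          exact Metric.mem_ball.mp hy
        have hsub : y - x ∈ domOf A := sub_mem_dom hlin hym hx
        have k1 : selA A y y - selA A x x = selA A (y - x) y + selA A x (y - x) := by
          have t1 : selA A (y - x) y = selA A y y - selA A x y :=
            selA_sub_left hlin hmax hym hx hym
          have t2 : selA A x (y - x) = selA A x y - selA A x x := map_sub _ _ _
          rw [t1, t2]; ring
        have b1 : |selA A (y - x) y| ≤ C * ‖y - x‖ * ‖y‖ := hC _ hsub _ hym
        have b2 : |selA A x (y - x)| ≤ C * ‖x‖ * ‖y - x‖ := hC _ hx _ hsub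
        have hyb : ‖y‖ ≤ ‖x‖ + 1 := by
          have : ‖y‖ - ‖x‖ ≤ ‖y - x‖ := norm_sub_norm_le y x
          have hδle : δ ≤ 1 := min_le_left _ _
          linarith
        have n3 : |selA A y y - selA A x x| ≤ C * ‖y - x‖ * ‖y‖ + C * ‖x‖ * ‖y - x‖ := by
          rw [k1]
          exact (abs_add_le _ _).trans (add_le_add b1 b2)
        have n4 : C * ‖y - x‖ * ‖y‖ ≤ C * ‖y - x‖ * (‖x‖ + 1) :=
          mul_le_mul_of_nonneg_left hyb (by positivity)
        have n5 : C * ‖y - x‖ * (‖x‖ + 1) + C * ‖x‖ * ‖y - x‖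
            = C * ‖y - x‖ * (1 + 2 * ‖x‖) := by ring
        have n6 : C * ‖y - x‖ * (1 + 2 * ‖x‖) ≤ C * δ * (1 + 2 * ‖x‖) := by
          have : C * ‖y - x‖ ≤ C * δ := mul_le_mul_of_nonneg_left hd.le hC0
          exact mul_le_mul_of_nonneg_right this (by positivity)
        have n7 : 2⁻¹ * (C * δ * (1 + 2 * ‖x‖)) = δ * D := by rw [hD]; ring
        have n8 : δ * D < ε := by
          have : δ * D + δ ≤ ε := by
            have : δ * (D + 1) = δ * D + δ := by ring
            linarith [hδ1]
          linarith
        have n9 : selA A x x - selA A y y ≤ |selA A y y - selA A x x| := by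
          rw [abs_sub_comm]
          exact le_abs_self _
        clear_value D ε δ
        linarith [n3, n4, n5, n6, n7, n8, n9]
      · rw [qA_top hym]
        exact EReal.coe_lt_top r
    | top => exact absurd hc not_top_lt
  · have hmem : (domOf A)ᶜ ∈ 𝓝 x := hdom.isOpen_compl.mem_nhds hx
    filter_upwards [hmem] with y hy
    rw [qA_top hy]
    exact lt_of_lt_of_le hc le_top

theorem qA_eq_lscHull [CompleteSpace X] (hlin : IsLinearRelation A) (hmax : MaxMonotoneOp A)
    (hdom : IsClosed (domOf A)) (x : X) : qA A x = lscHull (qA A) x := by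
  apply le_antisymm
  · exact le_sSup ⟨qA A, qA_lsc hlin hmax hdom, fun y => le_refl _, rfl⟩
  · apply sSup_le
    rintro v ⟨g, _, hle, rfl⟩
    exact hle x

end BWAux
namespace BWAux

open Filter Topology

variable {X : Type*} [NormedAddCommGroup X] [NormedSpace ℝ X]
variable {A S : X → Set (Dl X)}

theorem sym_monotone (hlin : IsLinearRelation A) (hmax : MaxMonotoneOp A) :
    MonotoneOp (symPart A) := by
  intro x xs y ys hxs hys
  have hx : x ∈ domOf A := by
    by_contra h
    rw [sym_empty h] at hxs
    exact absurd hxs (Set.notMem_empty _)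
  have hy : y ∈ domOf A := by
    by_contra h
    rw [sym_empty h] at hys
    exact absurd hys (Set.notMem_empty _)
  have hxy : x - y ∈ domOf A := sub_mem_dom hlin hx hy
  have e1 : xs (x - y) = 2⁻¹ * (selA A x (x - y) + selA A (x - y) x) :=
    (sym_mem_iff hlin hmax hx xs).mp hxs (x - y) hxy
  have e2 : ys (x - y) = 2⁻¹ * (selA A y (x - y) + selA A (x - y) y) :=
    (sym_mem_iff hlin hmax hy ys).mp hys (x - y) hxy
  have l1 : selA A (x - y) (x - y) = selA A x (x - y) - selA A y (x - y) :=
    selA_sub_left hlin hmax hx hy hxy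
  have l2 : selA A (x - y) (x - y) = selA A (x - y) x - selA A (x - y) y := map_sub _ _ _
  have pos : 0 ≤ selA A (x - y) (x - y) := selA_nonneg hlin hmax.1 hxy
  have e0 : (xs - ys) (x - y) = xs (x - y) - ys (x - y) := ContinuousLinearMap.sub_apply _ _ _
  rw [e0, e1, e2]
  linarith

theorem sym_maxmono [CompleteSpace X] (hlin : IsLinearRelation A) (hmax : MaxMonotoneOp A)
    (hdom : IsClosed (domOf A)) : MaxMonotoneOp (symPart A) := by
  refine ⟨sym_monotone hlin hmax, ?_⟩
  intro x xs hrel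
  have hx : x ∈ domOf A := by
    apply mem_dom_of_ann hlin hdom
    intro w hw
    have hw0 : ∀ t : ℝ, (t • w) ∈ symPart A 0 := by
      intro t
      apply (sym_mem_iff hlin hmax (zero_mem_dom hlin) _).mpr
      intro h hh
      have s1 : selA A 0 h = 0 := A0_ann hlin hmax.1 (selA_mem (zero_mem_dom hlin)) hh
      have s2 : selA A h 0 = 0 := map_zero _
      have s3 : w h = 0 := hw h hh
      simp [ContinuousLinearMap.smul_apply, smul_eq_mul, s1, s2, s3]
    have key : ∀ t : ℝ, 0 ≤ xs x - t * w x := by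
      intro t
      have := hrel 0 (t • w) (hw0 t)
      simpa [ContinuousLinearMap.sub_apply, ContinuousLinearMap.smul_apply,
        smul_eq_mul] using this
    exact real_eq_zero_of_forall_le key
  apply (sym_mem_iff hlin hmax hx xs).mpr
  intro h hh
  have key : ∀ t : ℝ, t * (2⁻¹ * (selA A x h + selA A h x)) + 0 ≤
      0 + t * xs h + t ^ 2 * selA A h h := by
    intro t
    have hth : t • h ∈ domOf A := smul_mem_dom hlin hh t
    have hy : x - t • h ∈ domOf A := sub_mem_dom hlin hx hth
    obtain ⟨g, hg, hgs⟩ := adj_nonempty hlin hmax hdom hy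
    have humem : (2⁻¹ : ℝ) • selA A (x - t • h) + (2⁻¹ : ℝ) • g ∈ symPart A (x - t • h) := by
      rw [symPart]
      exact Set.add_mem_add (Set.smul_mem_smul_set (selA_mem hy)) (Set.smul_mem_smul_set hg)
    have h0 := hrel _ _ humem
    have e0 : x - (x - t • h) = t • h := sub_sub_cancel x (t • h)
    rw [e0] at h0
    have l1 : selA A (x - t • h) h = selA A x h - t * selA A h h := by
      rw [selA_sub_left hlin hmax hx hth hh, selA_smul hlin hmax t hh hh]
    have l2 : g h = selA A h (x - t • h) := hgs h hh
    have l3 : selA A h (x - t • h) = selA A h x - t * selA A h h := by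
      rw [map_sub, map_smul, smul_eq_mul]
    have e1 : (xs - ((2⁻¹ : ℝ) • selA A (x - t • h) + (2⁻¹ : ℝ) • g)) (t • h) =
        t * xs h - t * (2⁻¹ * (selA A (x - t • h) h + selA A h (x - t • h))) := by
      simp only [ContinuousLinearMap.sub_apply, ContinuousLinearMap.add_apply,
        ContinuousLinearMap.smul_apply, map_smul, smul_eq_mul, l2]
      ring
    rw [e1, l1, l3] at h0
    nlinarith [h0]
  exact (real_eq_of_quad key).symm

/-- The symmetric part equals the subdifferential of `q_A`. -/
theorem sym_eq_subdiff (hlin : IsLinearRelation A) (hmax : MaxMonotoneOp A) (x : X) :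
    symPart A x = subdiff (qA A) x := by
  by_cases hx : x ∈ domOf A
  · ext zs
    rw [sym_mem_iff hlin hmax hx zs, subdiff_qA_mem_iff hlin hmax hx zs]
  · rw [sym_empty hx, subdiff_qA_empty hlin hmax hx]

theorem S_values [CompleteSpace X] (hlin : IsLinearRelation A) (hmax : MaxMonotoneOp A)
    (hdom : IsClosed (domOf A)) (hS : IsLinearSelection S (skewPart A)) {x : X}
    (hx : x ∈ domOf A) :
    ∃ s ∈ S x, (∀ h ∈ domOf A, s h = 2⁻¹ * (selA A x h - selA A h x)) ∧ S x = {s} := by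
  have hxS : x ∈ domOf S := by
    rw [hS.2.2.1, dom_skew hlin hmax hdom]
    exact hx
  obtain ⟨s, hs⟩ := hxS
  refine ⟨s, hs, (skew_mem_iff hlin hmax hx s).mp (hS.2.2.2 x hs), ?_⟩
  apply Set.eq_singleton_iff_unique_mem.mpr
  exact ⟨hs, fun t ht => hS.2.1 x ht hs⟩

theorem decompose_A [CompleteSpace X] (hlin : IsLinearRelation A) (hmax : MaxMonotoneOp A)
    (hdom : IsClosed (domOf A)) (hS : IsLinearSelection S (skewPart A)) (x : X) :
    A x = symPart A x + S x := by
  by_cases hx : x ∈ domOf A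
  · obtain ⟨s, hs, hsv, -⟩ := S_values hlin hmax hdom hS hx
    ext zs
    constructor
    · intro hzs
      have hzv : ∀ h ∈ domOf A, zs h = selA A x h := (A_mem_iff hlin hmax hx zs).mp hzs
      apply Set.mem_add.mpr
      refine ⟨zs - s, ?_, s, hs, by abel⟩
      apply (sym_mem_iff hlin hmax hx _).mpr
      intro h hh
      rw [ContinuousLinearMap.sub_apply, hzv h hh, hsv h hh]
      ring
    · intro hzs
      obtain ⟨u, hu, v, hv, rfl⟩ := Set.mem_add.mp hzs
      have hvs : v = s := hS.2.1 x hv hs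
      subst hvs
      apply (A_mem_iff hlin hmax hx _).mpr
      intro h hh
      rw [ContinuousLinearMap.add_apply, (sym_mem_iff hlin hmax hx u).mp hu h hh, hsv h hh]
      ring
  · have hxS : x ∉ domOf S := by
      rw [hS.2.2.1, dom_skew hlin hmax hdom]
      exact hx
    rw [A_empty hx, sym_empty hx, Set.empty_add]

theorem decompose_Astar [CompleteSpace X] (hlin : IsLinearRelation A) (hmax : MaxMonotoneOp A)
    (hdom : IsClosed (domOf A)) (hS : IsLinearSelection S (skewPart A)) (x : X) :
    adjointRel A x = symPart A x + (-(S x)) := by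
  by_cases hx : x ∈ domOf A
  · obtain ⟨s, hs, hsv, -⟩ := S_values hlin hmax hdom hS hx
    ext zs
    constructor
    · intro hzs
      have hzv : ∀ a ∈ domOf A, zs a = selA A a x := (adj_mem_iff hlin hmax hx zs).mp hzs
      apply Set.mem_add.mpr
      refine ⟨zs + s, ?_, -s, Set.mem_neg.mpr (by simpa using hs), by abel⟩
      apply (sym_mem_iff hlin hmax hx _).mpr
      intro h hh
      rw [ContinuousLinearMap.add_apply, hzv h hh, hsv h hh]
      ring
    · intro hzs
      obtain ⟨u, hu, v, hv, rfl⟩ := Set.mem_add.mp hzs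
      have hvs : -v = s := hS.2.1 x (Set.mem_neg.mp hv) hs
      have hvs' : v = -s := by rw [← hvs]; simp
      subst hvs'
      apply (adj_mem_iff hlin hmax hx _).mpr
      intro h hh
      rw [ContinuousLinearMap.add_apply, (sym_mem_iff hlin hmax hx u).mp hu h hh,
        ContinuousLinearMap.neg_apply, hsv h hh]
      ring
  · rw [adj_empty hlin hmax hdom hx, sym_empty hx, Set.empty_add]

theorem S_skewOp [CompleteSpace X] (hlin : IsLinearRelation A) (hmax : MaxMonotoneOp A)
    (hdom : IsClosed (domOf A)) (hS : IsLinearSelection S (skewPart A)) : SkewOp S := by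
  intro x s hs
  have hx : x ∈ domOf A := by
    have : x ∈ domOf S := ⟨s, hs⟩
    rwa [hS.2.2.1, dom_skew hlin hmax hdom] at this
  have := (skew_mem_iff hlin hmax hx s).mp (hS.2.2.2 x hs) x hx
  rw [this]
  ring

theorem negS_linear (hSlin : IsLinearRelation S) :
    IsLinearRelation (fun x => -(S x)) := by
  refine ⟨?_, ?_, ?_⟩
  · simp only [Set.mem_neg, neg_zero]
    exact hSlin.1
  · intro x xs y ys hxs hys
    simp only [Set.mem_neg] at *
    have := hSlin.2.1 x (-xs) y (-ys) hxs hys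
    rw [show -(xs + ys) = -xs + -ys by abel]
    exact this
  · intro c x xs hxs
    simp only [Set.mem_neg] at *
    have := hSlin.2.2 c x (-xs) hxs
    simpa [smul_neg] using this

theorem negS_skew (hSk : SkewOp S) : SkewOp (fun x => -(S x)) := by
  intro x xs hxs
  have := hSk x (-xs) (Set.mem_neg.mp hxs)
  simpa using this

theorem negS_single (hsg : AtMostSingleValued S) : AtMostSingleValued (fun x => -(S x)) := by
  intro x a ha b hb
  have := hsg x (Set.mem_neg.mp ha) (Set.mem_neg.mp hb)
  simpa using congrArg Neg.neg this

end BWAux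
/-- Let `A` be a maximal monotone linear relation with closed
domain and let `S` be a single-valued linear selection of `A∘`.  Then
`q_A = cl q_A`, `A₊ = ∂q_A` is maximal monotone, and `A = A₊ + S`,
`A* = A₊ + (−S)` are Borwein–Wiersma decompositions of `A` and `A*`. -/
theorem closed_domain_bw_decomposition
    [CompleteSpace X] (hrefl : ReflexiveReal X)
    (A S : X → Set (Dl X)) (hlin : IsLinearRelation A) (hmax : MaxMonotoneOp A)
    (hdom : IsClosed (domOf A)) (hS : IsLinearSelection S (skewPart A)) :
    (∀ x, qA A x = lscHull (qA A) x) ∧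
    (∀ x, symPart A x = subdiff (qA A) x) ∧ MaxMonotoneOp (symPart A) ∧
    (∀ x, A x = symPart A x + S x) ∧
    (∀ x, adjointRel A x = symPart A x + (-(S x))) ∧
    BWDecomposable A ∧ BWDecomposable (adjointRel A) := by
  refine ⟨BWAux.qA_eq_lscHull hlin hmax hdom,
    fun x => BWAux.sym_eq_subdiff hlin hmax x,
    BWAux.sym_maxmono hlin hmax hdom,
    BWAux.decompose_A hlin hmax hdom hS,
    BWAux.decompose_Astar hlin hmax hdom hS, ?_, ?_⟩
  · refine ⟨qA A, S, BWAux.qA_proper hlin hmax, BWAux.qA_lsc hlin hmax hdom,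
      BWAux.qA_convex hlin hmax, hS.1, BWAux.S_skewOp hlin hmax hdom hS, hS.2.1, fun x => ?_⟩
    rw [← BWAux.sym_eq_subdiff hlin hmax x]
    exact BWAux.decompose_A hlin hmax hdom hS x
  · refine ⟨qA A, fun x => -(S x), BWAux.qA_proper hlin hmax, BWAux.qA_lsc hlin hmax hdom,
      BWAux.qA_convex hlin hmax, BWAux.negS_linear hS.1,
      BWAux.negS_skew (BWAux.S_skewOp hlin hmax hdom hS), BWAux.negS_single hS.2.1,
      fun x => ?_⟩
    rw [← BWAux.sym_eq_subdiff hlin hmax x]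
    exact BWAux.decompose_Astar hlin hmax hdom hS x

end
end

section
/- Let A : X ⇉ X* be a maximal monotone linear relation. Then A is symmetric if and only if gra A = gra A*. -/
open Pointwise
open scoped Classical

noncomputable section

variable {X : Type*} [NormedAddCommGroup X] [NormedSpace ℝ X]

/-- A maximal monotone linear relation is symmetric iff
`gra A = gra A*`. -/
theorem symmetric_iff_graph_eq_adjoint
    [CompleteSpace X] (hrefl : ReflexiveReal X)
    (A : X → Set (Dl X)) (hlin : IsLinearRelation A) (hmax : MaxMonotoneOp A) :
    SymOp A ↔ graphOf A = graphOf (adjointRel A) := by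
  constructor
  · intro hsym
    apply Set.Subset.antisymm hsym
    rintro ⟨x, xs⟩ hx
    -- hx : ∀ a as, as ∈ A a → xs a = as x
    have hx' : ∀ a as, as ∈ A a → xs a = as x := hx
    -- Step 1: the quadratic form of the adjoint is nonnegative.
    have hq : ∀ (z : X) (zs : Dl X), (∀ a as, as ∈ A a → zs a = as z) → 0 ≤ zs z := by
      intro z zs hz
      by_contra hneg
      push_neg at hneg
      have hmem : -zs ∈ A z := by
        apply hmax.2
        intro y ys hys
        have h1 : zs y = ys z := hz y ys hys
        have h2 : 0 ≤ ys y := by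
          have := hmax.1 hys hlin.1
          simpa using this
        have h3 : ((-zs) - ys) (z - y) = -(zs z) + ys y := by
          simp [map_sub, h1]
          ring
        rw [h3]
        linarith
      have h4 : zs z = (-zs) z := hz z (-zs) hmem
      simp at h4
      linarith
    -- Step 2: any (x,xs) ∈ gra A* is monotonically related to gra A.
    apply hmax.2
    intro y ys hys
    apply hq
    intro a as has
    have h1 : xs a = as x := hx' a as has
    have hmem2 : ((y, ys) : X × Dl X) ∈ graphOf (adjointRel A) := hsym hys
    have h2 : ys a = as y := hmem2 a as has
    simp [map_sub, h1, h2]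
  · intro h
    exact h.le

end
end

section
/- Suppose X is a finite-dimensional real normed space with dim X = n, and let A : X ⇉ X* be a monotone linear relation. Then A is maximal monotone if and only if the dimension of gra A (as a linear subspace of X × X*) equals n. -/
open Pointwise
open scoped Classical

noncomputable section

variable {X : Type*} [NormedAddCommGroup X] [NormedSpace ℝ X]

lemma exists_posdef_bilin (Y : Type*) [AddCommGroup Y] [Module ℝ Y] [FiniteDimensional ℝ Y] :
    ∃ Φ : Y →ₗ[ℝ] Y →ₗ[ℝ] ℝ,
      (∀ x y, Φ x y = Φ y x) ∧ (∀ x, 0 ≤ Φ x x) ∧ (∀ x, Φ x x = 0 → x = 0) := by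
  classical
  let b : Module.Basis (Fin (Module.finrank ℝ Y)) ℝ Y := Module.finBasis ℝ Y
  refine ⟨LinearMap.mk₂ ℝ (fun x y => ∑ i, b.repr x i * b.repr y i)
    (fun x x' y => by simp [add_mul, Finset.sum_add_distrib])
    (fun c x y => by simp [Finset.mul_sum, mul_assoc])
    (fun x y y' => by simp [mul_add, Finset.sum_add_distrib])
    (fun c x y => by simp [Finset.mul_sum, mul_left_comm]), ?_, ?_, ?_⟩
  · intro x y
    simp [LinearMap.mk₂_apply, mul_comm]
  · intro x
    simp only [LinearMap.mk₂_apply]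
    exact Finset.sum_nonneg fun i _ => mul_self_nonneg _
  · intro x hx
    simp only [LinearMap.mk₂_apply] at hx
    have h := (Finset.sum_eq_zero_iff_of_nonneg
      (fun i _ => mul_self_nonneg (b.repr x i))).1 hx
    have hr : b.repr x = 0 := by
      ext i
      have := h i (Finset.mem_univ i)
      simpa using mul_self_eq_zero.1 this
    have := congrArg b.repr.symm hr
    simpa using this


set_option maxHeartbeats 1000000 in
/-- In a finite-dimensional space `X` with `dim X = n`, a
monotone linear relation `A` is maximal monotone iff `dim (gra A) = n`. -/
theorem maxMonotone_iff_finrank_graph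
    [FiniteDimensional ℝ X]
    (A : X → Set (Dl X)) (hlin : IsLinearRelation A) (hmono : MonotoneOp A)
    (V : Submodule ℝ (X × Dl X)) (hV : (V : Set (X × Dl X)) = graphOf A) :
    MaxMonotoneOp A ↔ Module.finrank ℝ V = Module.finrank ℝ X := by
  classical
  obtain ⟨Φ, hsym, hpos, hdef⟩ := exists_posdef_bilin X
  have memV : ∀ p : X × Dl X, p ∈ V ↔ p.2 ∈ A p.1 := by
    intro p
    constructor
    · intro h
      have : p ∈ (V : Set (X × Dl X)) := h
      rw [hV] at this; exact this
    · intro h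
      have : p ∈ graphOf A := h
      rw [← hV] at this; exact this
  have hposV : ∀ p : X × Dl X, p ∈ V → 0 ≤ p.2 p.1 := by
    intro p hp
    have h := hmono ((memV p).1 hp) hlin.1
    simpa using h
  -- the map j : X →ₗ Dl X, j x = Φ x ·
  let e : (X →ₗ[ℝ] ℝ) ≃ₗ[ℝ] Dl X := LinearMap.toContinuousLinearMap
  let j : X →ₗ[ℝ] Dl X := e.toLinearMap ∘ₗ Φ
  have hj : ∀ x y, j x y = Φ x y := by
    intro x y
    simp [j, e, LinearMap.coe_toContinuousLinearMap']
  have hdn : Module.finrank ℝ (Dl X) = Module.finrank ℝ X := by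
    rw [← e.finrank_eq]
    exact Subspace.dual_finrank_eq
  -- T : X × Dl X →ₗ Dl X
  let T : (X × Dl X) →ₗ[ℝ] Dl X := j ∘ₗ LinearMap.fst ℝ X (Dl X) + LinearMap.snd ℝ X (Dl X)
  have hT : ∀ p : X × Dl X, T p = j p.1 + p.2 := fun p => by simp [T]
  have hTinjV : ∀ p ∈ V, T p = 0 → p = 0 := by
    intro p hp h0
    have h2 : p.2 = -j p.1 := by
      have h := hT p
      rw [h0] at h
      exact eq_neg_of_add_eq_zero_right h.symm
    have hkey : 0 ≤ p.2 p.1 := hposV p hp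
    rw [h2] at hkey
    simp only [ContinuousLinearMap.neg_apply] at hkey
    have h00 : Φ p.1 p.1 = 0 := le_antisymm (by rw [← hj]; linarith) (hpos _)
    have h1 : p.1 = 0 := hdef _ h00
    have h2' : p.2 = 0 := by rw [h2, h1]; simp
    exact Prod.ext h1 h2'
  let Tres : V →ₗ[ℝ] Dl X := T.domRestrict V
  have hTresInj : Function.Injective Tres := by
    intro a b hab
    have h0 : T ((a : X × Dl X) - (b : X × Dl X)) = 0 := by
      rw [map_sub]
      simp only [Tres, LinearMap.domRestrict_apply] at hab
      rw [hab, sub_self]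
    have := hTinjV _ (V.sub_mem a.2 b.2) h0
    exact Subtype.ext (sub_eq_zero.1 this)
  constructor
  · -- maximal → finrank V = n
    intro hmax
    have hle : Module.finrank ℝ V ≤ Module.finrank ℝ X := by
      rw [← hdn]
      exact LinearMap.finrank_le_finrank_of_injective hTresInj
    rcases lt_or_eq_of_le hle with hlt | heq
    · exfalso
      set W := V.map T with hW
      have hWrank : Module.finrank ℝ W < Module.finrank ℝ X :=
        lt_of_le_of_lt (Submodule.finrank_map_le T V) hlt
      -- evaluation map X →ₗ (W →ₗ ℝ)
      let ev : X →ₗ[ℝ] (W →ₗ[ℝ] ℝ) :=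
        { toFun := fun z =>
            { toFun := fun w => (w : Dl X) z
              map_add' := by intro a b; simp
              map_smul' := by intro c a; simp }
          map_add' := by intro a b; ext w; simp
          map_smul' := by intro c a; ext w; simp }
      have hzex : ∃ z : X, z ≠ 0 ∧ ev z = 0 := by
        by_contra hcon
        push_neg at hcon
        have hinj : Function.Injective ev := by
          intro a b hab
          by_contra hne
          exact hcon (a - b) (sub_ne_zero.2 hne) (by rw [map_sub, hab, sub_self])
        have h1 : Module.finrank ℝ X ≤ Module.finrank ℝ (W →ₗ[ℝ] ℝ) :=
          LinearMap.finrank_le_finrank_of_injective hinj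
        have h2 : Module.finrank ℝ (W →ₗ[ℝ] ℝ) = Module.finrank ℝ W :=
          Subspace.dual_finrank_eq (K := ℝ) (V := W)
        omega
      obtain ⟨z, hz0, hz⟩ := hzex
      have hzero : ∀ y ys, ys ∈ A y → Φ y z + ys z = 0 := by
        intro y ys hy
        have hmem : T (y, ys) ∈ W := Submodule.mem_map_of_mem ((memV (y, ys)).2 hy)
        have := LinearMap.ext_iff.1 hz ⟨T (y, ys), hmem⟩
        simp only [ev, LinearMap.coe_mk, AddHom.coe_mk, LinearMap.zero_apply] at this
        rw [hT] at this
        simp only [ContinuousLinearMap.add_apply] at this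
        rw [hj] at this
        exact this
      set x₀ : X := (2 : ℝ)⁻¹ • z with hx₀
      set xs₀ : Dl X := j x₀ with hxs₀
      have hrel : ∀ y ys, ys ∈ A y → 0 ≤ (xs₀ - ys) (x₀ - y) := by
        intro y ys hy
        have h1 := hzero y ys hy
        have h2 : 0 ≤ ys y := hposV (y, ys) ((memV (y, ys)).2 hy)
        have h3 : 0 ≤ Φ z z := hpos z
        have hexp : (xs₀ - ys) (x₀ - y)
            = (2:ℝ)⁻¹ * ((2:ℝ)⁻¹ * Φ z z) - (2:ℝ)⁻¹ * Φ z y - (2:ℝ)⁻¹ * ys z + ys y := by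
          have e1 : xs₀ (x₀ - y) = Φ x₀ x₀ - Φ x₀ y := by
            rw [hxs₀, hj]; rw [map_sub]
          have e2 : ys (x₀ - y) = (2:ℝ)⁻¹ * ys z - ys y := by
            rw [map_sub, hx₀]; simp
          have e3 : Φ x₀ x₀ = (2:ℝ)⁻¹ * ((2:ℝ)⁻¹ * Φ z z) := by
            rw [hx₀]; simp [map_smul]
          have e4 : Φ x₀ y = (2:ℝ)⁻¹ * Φ z y := by
            rw [hx₀]; simp [map_smul]
          have e5 : (xs₀ - ys) (x₀ - y) = xs₀ (x₀ - y) - ys (x₀ - y) := by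
            simp
          rw [e5, e1, e2, e3, e4]; ring
        rw [hexp]
        have hszy : Φ z y = Φ y z := hsym z y
        nlinarith
      have hin : xs₀ ∈ A x₀ := hmax.2 x₀ xs₀ hrel
      have h1 := hzero x₀ xs₀ hin
      have h2 : xs₀ z = Φ x₀ z := by rw [hxs₀, hj]
      have h3 : Φ x₀ z = (2:ℝ)⁻¹ * Φ z z := by
        rw [hx₀]; simp [map_smul, hsym]
      have hzz : Φ z z = 0 := by
        rw [h2, h3] at h1; linarith
      exact hz0 (hdef z hzz)
    · exact heq
  · -- finrank V = n → maximal
    intro hrank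
    refine ⟨hmono, ?_⟩
    intro x xs hrel
    have hfr : Module.finrank ℝ V = Module.finrank ℝ (Dl X) := by rw [hrank, hdn]
    let E : V ≃ₗ[ℝ] Dl X := Tres.linearEquivOfInjective (K := ℝ) (V := V) (V₂ := Dl X) hTresInj hfr
    have hE : ∀ a : V, E a = Tres a := fun a =>
      rfl
    have hs : Function.Surjective Tres := by
      intro w
      exact ⟨E.symm w, by rw [← hE]; exact E.apply_symm_apply w⟩
    obtain ⟨v, hv⟩ := hs (j x + xs)
    have hvV : (v : X × Dl X) ∈ V := v.2
    have hTv : j (v : X × Dl X).1 + (v : X × Dl X).2 = j x + xs := by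
      rw [← hT]
      simpa [Tres, LinearMap.domRestrict_apply] using hv
    set d : X := x - (v : X × Dl X).1 with hd
    have hds : xs - (v : X × Dl X).2 = -(j d) := by
      rw [hd, map_sub, neg_sub]
      rw [sub_eq_sub_iff_add_eq_add]
      rw [add_comm]
      exact hTv.symm
    have hrel' := hrel (v : X × Dl X).1 (v : X × Dl X).2 ((memV _).1 hvV)
    rw [hds] at hrel'
    have hrd : ((-(j d)) (x - (v : X × Dl X).1) : ℝ) = -(Φ d d) := by
      rw [← hd]
      simp [hj]
    rw [hrd] at hrel'
    have hdd : Φ d d = 0 := le_antisymm (by linarith) (hpos d)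
    have hd0 : d = 0 := hdef d hdd
    have hx1 : x = (v : X × Dl X).1 := by
      rwa [hd, sub_eq_zero] at hd0
    have hxs : xs = (v : X × Dl X).2 := by
      rw [hx1] at hTv
      exact (add_left_cancel hTv).symm
    rw [hx1, hxs]
    exact (memV _).1 hvV


end
end
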